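/- arXiv:1502.04610 — 2 statements merged into one kernel-verified Lean document; each statement's English description precedes it below -/
import Mathlib

section
/- Let M = (m_1,...,m_k) be a tuple of positive integers with m_k ≥ 2, and let I = (i_1,...,i_j) be an allowable sub-tuple for M. Then n⁺(M_I) − n⁻(M_I) = δ + Σ_{ℓ=1}^{j} (−1)^{i_ℓ} m_{i_ℓ}, where δ = 0 if k is even and δ = 1 if k is odd. -/
/-- Continued fraction value of a list of rationals:
`cf [n₁,...,n_k] = 1/(n₁ + 1/(n₂ + ... + 1/n_k))`. -/
def cf : List ℚ → ℚ
  | [] => 0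
  | n :: L => 1 / (n + cf L)

/-- The alternating sequence `-2, 2, -2, 2, ..., ±2` of length `n`. -/
def altSeq (n : ℕ) : List ℤ :=
  (List.range n).map (fun j => (-1 : ℤ) ^ (j + 1) * 2)

/-- The `i`-th entry (1-based) of the tuple `M`. -/
def ent (M : List ℕ) (i : ℕ) : ℕ := M.getD (i - 1) 0

/-- `I` is an allowable sub-tuple for the tuple `M` of positive integers:
a strictly increasing tuple of indices in `{1,...,k}` with consecutive
gaps at least 2, such that for every index `i` with `m_i = 1` at least
one of `i-1, i, i+1` belongs to `I`. -/
def IsAllowable (M : List ℕ) (I : List ℕ) : Prop :=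
  I.Chain' (fun a b => a + 2 ≤ b) ∧
  (∀ i ∈ I, 1 ≤ i ∧ i ≤ M.length) ∧
  (∀ i, 1 ≤ i → i ≤ M.length → ent M i = 1 → (i - 1 ∈ I ∨ i ∈ I ∨ i + 1 ∈ I))

/-- The sign `∏_{i' ∈ I, i' < i} (-1)^(m_{i'})` adjusting the entries coming
from position `i` of `M`. -/
def subSign (M : List ℕ) (I : List ℕ) (i : ℕ) : ℤ :=
  ((I.filter (fun i' => decide (i' < i))).map (fun i' => (-1 : ℤ) ^ ent M i')).prod

/-- Before sign adjustment, the block of entries of `M_I` coming from position `i`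
of `M`: either the alternating sequence `-2,2,...,±2` of length `m_i - 1`
(if `i ∈ I`), or the single entry `m_i` increased by 1 for each neighbor of `i`
lying in `I`. -/
def block (M : List ℕ) (I : List ℕ) (i : ℕ) : List ℤ :=
  if i ∈ I then altSeq (ent M i - 1)
  else [(ent M i : ℤ) + (if i - 1 ∈ I then 1 else 0) + (if i + 1 ∈ I then 1 else 0)]

/-- The continued fraction expansion `M_I` associated to an allowable sub-tuple `I`
of `M`. -/
def MI (M : List ℕ) (I : List ℕ) : List ℤ :=
  ((List.range M.length).map (fun idx =>
    (block M I (idx + 1)).map (fun q => subSign M I (idx + 1) * q))).flatten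

/-- `n⁺(N) = #{i : (-1)^(i+1) n_i > 0}` (1-based `i`). -/
def nplus (N : List ℤ) : ℕ :=
  ((List.range N.length).filter
    (fun idx => decide (0 < (-1 : ℤ) ^ idx * N.getD idx 0))).length

/-- `n⁻(N) = #{i : (-1)^(i+1) n_i < 0}` (1-based `i`). -/
def nminus (N : List ℤ) : ℕ :=
  ((List.range N.length).filter
    (fun idx => decide ((-1 : ℤ) ^ idx * N.getD idx 0 < 0))).length

/-- `Σ_{i ∈ I} (-1)^i m_i`. -/
def sgnSum (M : List ℕ) (I : List ℕ) : ℤ :=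
  (I.map (fun i => (-1 : ℤ) ^ i * (ent M i : ℤ))).sum

/-- The dual sub-tuple `(k+1-i_j, ..., k+1-i_1)` of `I = (i_1,...,i_j)`. -/
def dualSub (k : ℕ) (I : List ℕ) : List ℕ :=
  (I.map (fun i => k + 1 - i)).reverse

/-- `(m_1,...,m_k)` is super-increasing if `m_i > Σ_{j<i} m_j` for all `i`. -/
def SuperInc (M : List ℕ) : Prop :=
  ∀ i, 1 ≤ i → i ≤ M.length → (M.take (i - 1)).sum < ent M i

/-!
With `altSignSum N = Σ_t (-1)^t sign(n_t)` we have `n⁺(N) - n⁻(N) = altSignSum N`, and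
`altSignSum` is additive over concatenation up to the sign `(-1)^(length of the first part)`.
Reading `M_I` block by block, the part coming from positions `1, …, n` has length of the
parity of `n + Σ_{i ∈ I, i ≤ n} m_i`, which is also the parity of the sign multiplying block
`n + 1`. Hence block `p` is counted with sign `(-1)^(p-1)`: for `p ∈ I` (an alternating `∓2`
sequence of length `m_p - 1`) it contributes `(-1)^(p-1) (1 - m_p)`, and otherwise (one
positive entry) `(-1)^(p-1)`. Summing over `p = 1, …, k` gives `δ + Σ_ℓ (-1)^(i_ℓ) m_(i_ℓ)`.
-/

@[to_additive]
theorem List.Nodup.prod_map_filter_lt_succ {M : Type*} [CommMonoid M] {l : List ℕ}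
    (hl : l.Nodup) (f : ℕ → M) (p : ℕ) :
    ((l.filter (· < p + 1)).map f).prod =
      ((l.filter (· < p)).map f).prod * if p ∈ l then f p else 1 := by
  have hsplit := List.filter_append_perm (· < p) (l.filter (· < p + 1))
  rw [← (hsplit.map f).prod_eq, List.map_append, List.prod_append, List.filter_filter,
    List.filter_filter]
  have hlt : l.filter (fun a => decide (a < p) && decide (a < p + 1)) = l.filter (· < p) :=
    List.filter_congr fun i _ => by grind
  have heq : l.filter (fun a => !decide (a < p) && decide (a < p + 1)) = l.filter (· = p) :=
    List.filter_congr fun i _ => by grind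
  rw [hlt, heq, List.filter_eq, hl.count]
  split_ifs <;> simp

def altSignSum : List ℤ → ℤ
  | [] => 0
  | a :: L => a.sign - altSignSum L

theorem altSignSum_append (A B : List ℤ) :
    altSignSum (A ++ B) = altSignSum A + (-1) ^ A.length * altSignSum B := by
  induction A with
  | nil => simp [altSignSum]
  | cons a A ih => simp only [List.cons_append, altSignSum, ih, List.length_cons, pow_succ]; ring

theorem altSignSum_map_mul (c : ℤ) (B : List ℤ) :
    altSignSum (B.map (c * ·)) = c.sign * altSignSum B := by
  induction B with
  | nil => simp [altSignSum]
  | cons b B ih => simp only [List.map_cons, altSignSum, ih, Int.sign_mul]; ring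

theorem altSeq_succ (n : ℕ) : altSeq (n + 1) = -2 :: (altSeq n).map (-1 * ·) := by
  simp only [altSeq, List.range_succ_eq_map, List.map_cons, List.map_map]
  congr 1
  exact List.map_congr_left fun j _ => by simp [pow_succ]

theorem altSignSum_altSeq (n : ℕ) : altSignSum (altSeq n) = -n := by
  induction n with
  | zero => simp [altSeq, altSignSum]
  | succ n ih =>
    rw [altSeq_succ, altSignSum, altSignSum_map_mul, ih, show Int.sign (-2) = -1 from rfl,
      show Int.sign (-1) = -1 from rfl]
    push_cast
    ring

theorem List.length_filter_range_succ (P : ℕ → Bool) (n : ℕ) :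
    ((List.range (n + 1)).filter P).length =
      (if P 0 then 1 else 0) + ((List.range n).filter (P ∘ Nat.succ)).length := by
  rw [List.range_succ_eq_map, List.filter_cons, List.filter_map]
  split <;> simp [add_comm]

theorem nplus_cons (a : ℤ) (L : List ℤ) :
    nplus (a :: L) = (if 0 < a then 1 else 0) + nminus L := by
  unfold nplus nminus
  rw [List.length_cons, List.length_filter_range_succ]
  congr 3
  · simp
  · funext j
    simp [pow_succ]

theorem nminus_cons (a : ℤ) (L : List ℤ) :
    nminus (a :: L) = (if a < 0 then 1 else 0) + nplus L := by
  unfold nplus nminus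
  rw [List.length_cons, List.length_filter_range_succ]
  congr 3
  · simp
  · funext j
    simp [pow_succ]

theorem nplus_sub_nminus_eq_altSignSum (N : List ℤ) :
    (nplus N : ℤ) - nminus N = altSignSum N := by
  induction N with
  | nil => simp [nplus, nminus, altSignSum]
  | cons a L ih =>
    rw [nplus_cons, nminus_cons, altSignSum, ← ih]
    rcases lt_trichotomy a 0 with h | rfl | h
    · simp [h, h.not_gt, Int.sign_eq_neg_one_of_neg]; ring
    · simp
    · simp [h, h.not_gt, Int.sign_eq_one_of_pos]; ring

theorem ent_pos {M : List ℕ} (hpos : ∀ m ∈ M, 0 < m) {i : ℕ} (h1 : 1 ≤ i)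
    (h2 : i ≤ M.length) : 0 < ent M i := by
  have hlt : i - 1 < M.length := by omega
  rw [ent, List.getD_eq_getElem M 0 hlt]
  exact hpos _ (List.getElem_mem hlt)

theorem isUnit_subSign (M I : List ℕ) (i : ℕ) : IsUnit (subSign M I i) :=
  List.prod_isUnit fun _ hu => by
    obtain ⟨_, _, rfl⟩ := List.mem_map.mp hu
    exact (isUnit_neg_one).pow _

theorem sign_subSign (M I : List ℕ) (i : ℕ) : (subSign M I i).sign = subSign M I i := by
  rcases Int.isUnit_iff.mp (isUnit_subSign M I i) with h | h <;> rw [h] <;> rfl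

theorem subSign_succ {I : List ℕ} (hI : I.Nodup) (M : List ℕ) (i : ℕ) :
    subSign M I (i + 1) = subSign M I i * if i ∈ I then (-1) ^ ent M i else 1 :=
  hI.prod_map_filter_lt_succ _ i

theorem sgnSum_filter_lt_succ {I : List ℕ} (hI : I.Nodup) (M : List ℕ) (i : ℕ) :
    sgnSum M (I.filter (· < i + 1)) =
      sgnSum M (I.filter (· < i)) + if i ∈ I then (-1) ^ i * (ent M i : ℤ) else 0 :=
  hI.sum_map_filter_lt_succ _ i

theorem neg_one_pow_length_block (M I : List ℕ) {i : ℕ} (hi : 0 < ent M i) :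
    (-1 : ℤ) ^ (block M I i).length = -if i ∈ I then (-1) ^ ent M i else 1 := by
  by_cases hiI : i ∈ I
  · obtain ⟨m, hm⟩ := Nat.exists_eq_add_of_lt hi
    simp [block, hiI, altSeq, hm, pow_succ]
  · simp [block, hiI]

theorem altSignSum_block (M I : List ℕ) {i : ℕ} (hi : 0 < ent M i) :
    altSignSum (block M I i) = if i ∈ I then 1 - (ent M i : ℤ) else 1 := by
  by_cases hiI : i ∈ I
  · rw [block, if_pos hiI, if_pos hiI, altSignSum_altSeq]
    omega
  · rw [block, if_neg hiI, if_neg hiI, altSignSum, altSignSum, sub_zero]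
    apply Int.sign_eq_one_of_pos
    split_ifs <;> omega

theorem ite_mod_two_succ (n : ℕ) :
    (if (n + 1) % 2 = 0 then 0 else 1 : ℤ) = (if n % 2 = 0 then 0 else 1) + (-1) ^ n := by
  rcases Nat.mod_two_eq_zero_or_one n with h | h
  · rw [(Nat.even_iff.mpr h).neg_one_pow, if_pos h, if_neg (show (n + 1) % 2 ≠ 0 by omega)]
    norm_num
  · rw [(Nat.odd_iff.mpr h).neg_one_pow, if_neg (show n % 2 ≠ 0 by omega),
      if_pos (show (n + 1) % 2 = 0 by omega)]
    norm_num

theorem subSign_zero (M I : List ℕ) : subSign M I 0 = 1 := by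
  simp [subSign]

theorem sgnSum_filter_lt_zero (M I : List ℕ) : sgnSum M (I.filter (· < 0)) = 0 := by
  simp [sgnSum]

def MIprefix (M I : List ℕ) (n : ℕ) : List ℤ :=
  ((List.range n).map (fun idx =>
    (block M I (idx + 1)).map (fun q => subSign M I (idx + 1) * q))).flatten

theorem MI_eq_MIprefix (M I : List ℕ) : MI M I = MIprefix M I M.length := rfl

theorem MIprefix_succ (M I : List ℕ) (n : ℕ) :
    MIprefix M I (n + 1) =
      MIprefix M I n ++ (block M I (n + 1)).map (subSign M I (n + 1) * ·) := by
  simp [MIprefix, List.range_succ]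

section Prefix

variable {M I : List ℕ} (hpos : ∀ m ∈ M, 0 < m) (hI : I.Nodup)
  (hbound : ∀ i ∈ I, 1 ≤ i ∧ i ≤ M.length)
include hpos hI hbound

theorem neg_one_pow_length_MIprefix {n : ℕ} (hn : n ≤ M.length) :
    (-1 : ℤ) ^ (MIprefix M I n).length = (-1) ^ n * subSign M I (n + 1) := by
  induction n with
  | zero =>
    have h0 : 0 ∉ I := fun h => by have := (hbound 0 h).1; omega
    simp [MIprefix, subSign_succ hI, subSign_zero, h0]
  | succ n ih =>
    rw [MIprefix_succ, List.length_append, List.length_map, pow_add, ih (by omega),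
      neg_one_pow_length_block M I (ent_pos hpos (by omega) hn), subSign_succ hI M (n + 1)]
    ring

theorem altSignSum_MIprefix {n : ℕ} (hn : n ≤ M.length) :
    altSignSum (MIprefix M I n) =
      (if n % 2 = 0 then 0 else 1) + sgnSum M (I.filter (· < n + 1)) := by
  induction n with
  | zero =>
    have h0 : 0 ∉ I := fun h => by have := (hbound 0 h).1; omega
    rw [sgnSum_filter_lt_succ hI, sgnSum_filter_lt_zero, if_neg h0]
    simp [MIprefix, altSignSum]
  | succ n ih =>
    rw [MIprefix_succ, altSignSum_append, altSignSum_map_mul, sign_subSign, ← mul_assoc,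
      neg_one_pow_length_MIprefix hpos hI hbound (by omega), mul_assoc ((-1 : ℤ) ^ n),
      Int.isUnit_mul_self (isUnit_subSign M I _), mul_one, ih (by omega),
      altSignSum_block M I (ent_pos hpos (by omega) hn), sgnSum_filter_lt_succ hI M (n + 1),
      ite_mod_two_succ]
    split_ifs <;> ring

end Prefix

theorem IsAllowable.nodup {M I : List ℕ} (h : IsAllowable M I) : I.Nodup :=
  (List.isChain_iff_pairwise.mp
    (h.1.imp fun a b (hab : a + 2 ≤ b) => (by omega : a < b))).nodup

theorem nplus_sub_nminus_MI_general (M : List ℕ) (hpos : ∀ m ∈ M, 0 < m)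
    (I : List ℕ) (hI : IsAllowable M I) :
    (nplus (MI M I) : ℤ) - (nminus (MI M I) : ℤ) =
      (if M.length % 2 = 0 then 0 else 1) + sgnSum M I := by
  have hbound := hI.2.1
  have hfilter : I.filter (· < M.length + 1) = I :=
    List.filter_eq_self.mpr fun i hi => by simpa [Nat.lt_succ_iff] using (hbound i hi).2
  rw [nplus_sub_nminus_eq_altSignSum, MI_eq_MIprefix,
    altSignSum_MIprefix hpos hI.nodup hbound le_rfl, hfilter]

/-- Theorem 4.1 of the paper: for an allowable sub-tuple `I` of `M`,
`n⁺(M_I) - n⁻(M_I) = δ + Σ_{ℓ} (-1)^(i_ℓ) m_(i_ℓ)`, where `δ = 0` if `k`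
is even and `δ = 1` if `k` is odd. -/
theorem nplus_sub_nminus_MI (M : List ℕ) (hpos : ∀ m ∈ M, 0 < m)
    (hlast : 2 ≤ M.getLastD 0) (I : List ℕ) (hI : IsAllowable M I) :
    (nplus (MI M I) : ℤ) - (nminus (MI M I) : ℤ) =
      (if M.length % 2 = 0 then 0 else 1) + sgnSum M I :=
  nplus_sub_nminus_MI_general M hpos I hI
end

section
/- For every n ≥ 1, the tuple M_{3n} = (m_1,...,m_{3n}) with m_j = 2^{j+1} − 1 (i.e. (3, 7, 15, 31, ..., 2^{3n+1} − 1)) consists of odd positive integers, has length divisible by 3, and is super-increasing; consequently any two distinct allowable sub-tuples I = (i_1,...,i_r) and J = (j_1,...,j_s) for M_{3n} satisfy Σ_{ℓ=1}^{r} (−1)^{i_ℓ} m_{i_ℓ} ≠ Σ_{ℓ=1}^{s} (−1)^{j_ℓ} m_{j_ℓ}. -/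
/-! If every `m_k` exceeds `m_1 + ⋯ + m_{k-1}`, then for distinct index sets `I ≠ J` the largest
index `m` of `I ∆ J` decides the sign of `Σ_I (-1)^i m_i - Σ_J (-1)^j m_j`: the term `±m_m` is
larger in absolute value than all the other terms together. So signed sums over (strictly
increasing lists of) distinct index sets differ. The tuple `m_j = 2^(j+1) - 1 = mersenne (j+1)`
is super-increasing because `2^(k+1) - 1 = 2 (2^k - 1) + 1`. -/

open Finset symmDiff

namespace Finset

variable {ι G : Type*} [AddCommGroup G]

lemma sum_ne_zero_of_sum_abs_erase_lt [LinearOrder G] [IsOrderedAddMonoid G]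
    [DecidableEq ι] {s : Finset ι} {f : ι → G} {m : ι} (hm : m ∈ s)
    (h : ∑ i ∈ s.erase m, |f i| < |f m|) : ∑ i ∈ s, f i ≠ 0 := by
  rw [← add_sum_erase s f hm]
  intro h0
  have : |f m| ≤ ∑ i ∈ s.erase m, |f i| :=
    calc |f m| = |∑ i ∈ s.erase m, f i| := by rw [eq_neg_of_add_eq_zero_left h0, abs_neg]
      _ ≤ ∑ i ∈ s.erase m, |f i| := abs_sum_le_sum_abs _ _
  exact this.not_gt h

lemma sum_symmDiff_ite [DecidableEq ι] (A B : Finset ι) (w : ι → G) :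
    ∑ i ∈ A ∆ B, (if i ∈ A then w i else -w i) = ∑ i ∈ A, w i - ∑ i ∈ B, w i := by
  rw [symmDiff_def, sup_eq_union, sum_union disjoint_sdiff_sdiff, ← sum_sdiff_sub_sum_sdiff,
    sub_eq_add_neg, ← sum_neg_distrib]
  congr 1
  · exact sum_congr rfl fun i hi => if_pos (mem_sdiff.mp hi).1
  · exact sum_congr rfl fun i hi => if_neg (mem_sdiff.mp hi).2

lemma eq_of_sum_eq_of_superIncreasing [LinearOrder G] [IsOrderedAddMonoid G] [LinearOrder ι]
    {s A B : Finset ι} {w : ι → G} (hw : ∀ k ∈ s, ∑ i ∈ s with i < k, |w i| < |w k|)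
    (hA : A ⊆ s) (hB : B ⊆ s) (h : ∑ i ∈ A, w i = ∑ i ∈ B, w i) : A = B := by
  by_contra hne
  have hD : (A ∆ B).Nonempty := symmDiff_nonempty.mpr hne
  set m := (A ∆ B).max' hD
  have hm : m ∈ A ∆ B := max'_mem _ hD
  have hDs : A ∆ B ⊆ s := symmDiff_le_sup.trans (sup_le hA hB)
  refine sum_ne_zero_of_sum_abs_erase_lt (f := fun i => if i ∈ A then w i else -w i) hm ?_
    ((sum_symmDiff_ite A B w).trans (sub_eq_zero.mpr h))
  have habs (i : ι) : |(if i ∈ A then w i else -w i)| = |w i| := by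
    split_ifs <;> simp
  simp only [habs]
  calc ∑ i ∈ (A ∆ B).erase m, |w i| ≤ ∑ i ∈ s with i < m, |w i| := by
        refine sum_le_sum_of_subset_of_nonneg (fun i hi => ?_) fun _ _ _ => abs_nonneg _
        obtain ⟨him, hi⟩ := mem_erase.mp hi
        exact mem_filter.mpr ⟨hDs hi, lt_of_le_of_ne (le_max' _ _ hi) him⟩
    _ < |w m| := hw m (hDs hm)

end Finset

lemma sum_range_mersenne_add_lt {a : ℕ} (ha : 0 < a) (k : ℕ) :
    ∑ j ∈ range k, mersenne (j + a) < mersenne (k + a) := by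
  induction k with
  | zero => simpa using ha
  | succ k ih =>
    rw [sum_range_succ, add_right_comm, mersenne_succ]
    omega

section Tuples

variable {M I J : List ℕ}

lemma IsAllowable.pairwise_lt (hI : IsAllowable M I) : I.Pairwise (· < ·) :=
  List.isChain_iff_pairwise.mp (hI.1.imp fun h => by omega)

lemma IsAllowable.toFinset_subset (hI : IsAllowable M I) : I.toFinset ⊆ Icc 1 M.length :=
  fun i hi => mem_Icc.mpr (hI.2.1 i (List.mem_toFinset.mp hi))

lemma sgnSum_eq_sum_toFinset (M : List ℕ) (hI : I.Nodup) :
    sgnSum M I = ∑ i ∈ I.toFinset, (-1 : ℤ) ^ i * ent M i :=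
  (List.sum_toFinset _ hI).symm

lemma sum_Ico_ent_eq_sum_take {k : ℕ} (hk : k ≤ M.length) :
    ∑ i ∈ Ico 1 (k + 1), ent M i = (M.take k).sum := by
  induction k with
  | zero => simp
  | succ k ih =>
    rw [sum_Ico_succ_top (by omega), ih (by omega), List.sum_take_succ M k (by omega)]
    simp [ent, List.getElem?_eq_getElem (show k < M.length by omega)]

lemma SuperInc.sum_abs_lt (hM : SuperInc M) {k : ℕ} (hk : k ∈ Icc 1 M.length) :
    ∑ i ∈ Icc 1 M.length with i < k, |(-1 : ℤ) ^ i * ent M i| <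
      |(-1 : ℤ) ^ k * ent M k| := by
  obtain ⟨hk1, hkM⟩ := mem_Icc.mp hk
  have hfilter : {i ∈ Icc 1 M.length | i < k} = Ico 1 (k - 1 + 1) := by
    ext i
    simp only [mem_filter, mem_Icc, mem_Ico]
    omega
  simp only [abs_mul, abs_neg_one_pow, one_mul, Nat.abs_cast, hfilter]
  exact_mod_cast (sum_Ico_ent_eq_sum_take (by omega)).trans_lt (hM k hk1 hkM)

theorem SuperInc.eq_of_sgnSum_eq (hM : SuperInc M) (hI : IsAllowable M I)
    (hJ : IsAllowable M J) (h : sgnSum M I = sgnSum M J) : I = J := by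
  have hIJ : I.toFinset = J.toFinset := by
    refine eq_of_sum_eq_of_superIncreasing (fun k hk => hM.sum_abs_lt hk)
      hI.toFinset_subset hJ.toFinset_subset ?_
    rwa [← sgnSum_eq_sum_toFinset M hI.pairwise_lt.nodup,
      ← sgnSum_eq_sum_toFinset M hJ.pairwise_lt.nodup]
  exact hI.pairwise_lt.eq_of_mem_iff hJ.pairwise_lt fun a => by
    simpa using congrArg (a ∈ ·) hIJ

theorem SuperInc.map_range {f : ℕ → ℕ} (hf : ∀ k, ∑ j ∈ range k, f j < f k) (N : ℕ) :
    SuperInc ((List.range N).map f) := by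
  intro i hi1 hiN
  simp only [List.length_map, List.length_range] at hiN
  have hent : ent ((List.range N).map f) i = f (i - 1) := by
    simp [ent, show i - 1 < N by omega]
  rw [hent, ← List.map_take, List.take_range, min_eq_left (by omega)]
  convert hf (i - 1) using 1
  rw [← List.toFinset_range, List.sum_toFinset _ List.nodup_range]

end Tuples

theorem family_M3n_superInc_no_repeats_general (n : ℕ) :
    (∀ m ∈ (List.range (3 * n)).map (fun j => 2 ^ (j + 2) - 1), 0 < m ∧ Odd m) ∧
    3 ∣ ((List.range (3 * n)).map (fun j => 2 ^ (j + 2) - 1)).length ∧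
    SuperInc ((List.range (3 * n)).map (fun j => 2 ^ (j + 2) - 1)) ∧
    (∀ I J : List ℕ,
      IsAllowable ((List.range (3 * n)).map (fun j => 2 ^ (j + 2) - 1)) I →
      IsAllowable ((List.range (3 * n)).map (fun j => 2 ^ (j + 2) - 1)) J →
      I ≠ J →
      sgnSum ((List.range (3 * n)).map (fun j => 2 ^ (j + 2) - 1)) I ≠
        sgnSum ((List.range (3 * n)).map (fun j => 2 ^ (j + 2) - 1)) J) := by
  have hsup : SuperInc ((List.range (3 * n)).map (fun j => mersenne (j + 2))) :=
    SuperInc.map_range (sum_range_mersenne_add_lt two_pos) (3 * n)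
  refine ⟨?_, by simp, hsup, fun I J hI hJ hne h => hne (hsup.eq_of_sgnSum_eq hI hJ h)⟩
  simp only [List.mem_map, List.mem_range]
  rintro _ ⟨j, -, rfl⟩
  exact ⟨mersenne_pos.mpr (by omega), mersenne_odd.mpr (by omega)⟩

/-- The family `M_(3n) = (3, 7, 15, ..., 2^(3n+1) - 1)`: it consists of odd
positive integers, has length divisible by 3, and is super-increasing; hence
distinct allowable sub-tuples have distinct signed sums (no repeated boundary
slopes). -/
theorem family_M3n_superInc_no_repeats (n : ℕ) (hn : 1 ≤ n) :
    (∀ m ∈ (List.range (3 * n)).map (fun j => 2 ^ (j + 2) - 1), 0 < m ∧ Odd m) ∧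
    3 ∣ ((List.range (3 * n)).map (fun j => 2 ^ (j + 2) - 1)).length ∧
    SuperInc ((List.range (3 * n)).map (fun j => 2 ^ (j + 2) - 1)) ∧
    (∀ I J : List ℕ,
      IsAllowable ((List.range (3 * n)).map (fun j => 2 ^ (j + 2) - 1)) I →
      IsAllowable ((List.range (3 * n)).map (fun j => 2 ^ (j + 2) - 1)) J →
      I ≠ J →
      sgnSum ((List.range (3 * n)).map (fun j => 2 ^ (j + 2) - 1)) I ≠
        sgnSum ((List.range (3 * n)).map (fun j => 2 ^ (j + 2) - 1)) J) :=
  family_M3n_superInc_no_repeats_general n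
end
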